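/- arXiv:2104.08740 — 5 statements merged into one kernel-verified Lean document; each statement's English description precedes it below -/
import Mathlib

section
/- Let ψ(ρ) = (1+ρ²) log((1+ρ)/2) − (1−ρ)² log((1−ρ)/2). Then ψ(0) = 0, ψ is first increasing then decreasing on [0, 1/2], and there exists a unique ρ* ∈ (0, 1/2) with ψ(ρ*) = 0 and ψ(ρ) ≥ 0 for all ρ ∈ [0, ρ*]. -/
noncomputable def psi (ρ : ℝ) : ℝ :=
  (1 + ρ ^ 2) * Real.log ((1 + ρ) / 2) - (1 - ρ) ^ 2 * Real.log ((1 - ρ) / 2)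

noncomputable def psi' (ρ : ℝ) : ℝ :=
  2 * ρ * Real.log ((1 + ρ) / 2) + (1 + ρ ^ 2) / (1 + ρ) +
    2 * (1 - ρ) * Real.log ((1 - ρ) / 2) + (1 - ρ)

noncomputable def psi'' (ρ : ℝ) : ℝ :=
  2 * Real.log ((1 + ρ) / 2) - 2 * Real.log ((1 - ρ) / 2) + 2 * ρ / (1 + ρ) +
    (2 * ρ * (1 + ρ) - (1 + ρ ^ 2)) / (1 + ρ) ^ 2 - 3

lemma hasDerivAt_psi {ρ : ℝ} (h1 : -1 < ρ) (h2 : ρ < 1) :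
    HasDerivAt psi (psi' ρ) ρ := by
  have hp : (0:ℝ) < 1 + ρ := by linarith
  have hm : (0:ℝ) < 1 - ρ := by linarith
  have hB : HasDerivAt (fun ρ : ℝ => (1 + ρ) / 2) (1 / 2) ρ := by
    simpa using ((hasDerivAt_id ρ).const_add (1:ℝ)).div_const 2
  have hD : HasDerivAt (fun ρ : ℝ => (1 - ρ) / 2) (-1 / 2) ρ := by
    simpa using ((hasDerivAt_id ρ).const_sub (1:ℝ)).div_const 2
  have hlogB : HasDerivAt (fun ρ : ℝ => Real.log ((1 + ρ) / 2))
      ((1 / 2) / ((1 + ρ) / 2)) ρ := hB.log (by positivity)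
  have hlogD : HasDerivAt (fun ρ : ℝ => Real.log ((1 - ρ) / 2))
      ((-1 / 2) / ((1 - ρ) / 2)) ρ := hD.log (by positivity)
  have hA : HasDerivAt (fun ρ : ℝ => (1:ℝ) + ρ ^ 2) (2 * ρ) ρ := by
    simpa using ((hasDerivAt_pow 2 ρ).const_add (1:ℝ))
  have hC : HasDerivAt (fun ρ : ℝ => (1 - ρ) ^ 2) (2 * (1 - ρ) ^ 1 * (-1)) ρ :=
    (((hasDerivAt_id ρ).const_sub (1:ℝ))).pow 2
  have := (hA.mul hlogB).sub (hC.mul hlogD)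
  refine HasDerivAt.congr_deriv (f := psi) this ?_
  unfold psi'
  field_simp
  ring

lemma hasDerivAt_psi' {ρ : ℝ} (h1 : -1 < ρ) (h2 : ρ < 1) :
    HasDerivAt psi' (psi'' ρ) ρ := by
  have hp : (0:ℝ) < 1 + ρ := by linarith
  have hm : (0:ℝ) < 1 - ρ := by linarith
  have hB : HasDerivAt (fun ρ : ℝ => (1 + ρ) / 2) (1 / 2) ρ := by
    simpa using ((hasDerivAt_id ρ).const_add (1:ℝ)).div_const 2
  have hD : HasDerivAt (fun ρ : ℝ => (1 - ρ) / 2) (-1 / 2) ρ := by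
    simpa using ((hasDerivAt_id ρ).const_sub (1:ℝ)).div_const 2
  have hlogB : HasDerivAt (fun ρ : ℝ => Real.log ((1 + ρ) / 2))
      ((1 / 2) / ((1 + ρ) / 2)) ρ := hB.log (by positivity)
  have hlogD : HasDerivAt (fun ρ : ℝ => Real.log ((1 - ρ) / 2))
      ((-1 / 2) / ((1 - ρ) / 2)) ρ := hD.log (by positivity)
  have h2ρ : HasDerivAt (fun ρ : ℝ => 2 * ρ) 2 ρ := by
    simpa using (hasDerivAt_id ρ).const_mul (2:ℝ)
  have h2m : HasDerivAt (fun ρ : ℝ => 2 * (1 - ρ)) (-2) ρ := by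
    simpa using ((hasDerivAt_id ρ).const_sub (1:ℝ)).const_mul (2:ℝ)
  have hnum : HasDerivAt (fun ρ : ℝ => (1:ℝ) + ρ ^ 2) (2 * ρ) ρ := by
    simpa using ((hasDerivAt_pow 2 ρ).const_add (1:ℝ))
  have hden : HasDerivAt (fun ρ : ℝ => (1:ℝ) + ρ) 1 ρ := by
    simpa using (hasDerivAt_id ρ).const_add (1:ℝ)
  have hfrac : HasDerivAt (fun ρ : ℝ => (1 + ρ ^ 2) / (1 + ρ))
      ((2 * ρ * (1 + ρ) - (1 + ρ ^ 2) * 1) / (1 + ρ) ^ 2) ρ :=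
    hnum.div hden (by positivity)
  have hlast : HasDerivAt (fun ρ : ℝ => (1:ℝ) - ρ) (-1) ρ := by
    simpa using (hasDerivAt_id ρ).const_sub (1:ℝ)
  have := (((h2ρ.mul hlogB).add hfrac).add (h2m.mul hlogD)).add hlast
  refine HasDerivAt.congr_deriv (f := psi') this ?_
  unfold psi''
  field_simp
  ring

lemma log3_lt : Real.log 3 < 1.104 := by
  have he : (2.7182818283 : ℝ) < Real.exp 1 := Real.exp_one_gt_d9
  have h0 : (0:ℝ) < Real.exp 1 := Real.exp_pos 1
  have h1 : Real.log (3 / Real.exp 1) < 3 / Real.exp 1 - 1 :=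
    Real.log_lt_sub_one_of_pos (by positivity) (by
      intro h
      have : (3:ℝ) = Real.exp 1 := by field_simp at h; linarith
      nlinarith [Real.exp_one_lt_d9])
  have h2 : Real.log (3 / Real.exp 1) = Real.log 3 - 1 := by
    rw [Real.log_div (by norm_num) (ne_of_gt h0), Real.log_exp]
  have h3 : 3 / Real.exp 1 < 3 / 2.7182818283 :=
    div_lt_div_of_pos_left (by norm_num) (by norm_num) he
  have : Real.log 3 < 3 / 2.7182818283 := by linarith
  nlinarith

lemma psi''_neg {ρ : ℝ} (h0 : 0 ≤ ρ) (h2 : ρ ≤ 1 / 2) : psi'' ρ < 0 := by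
  have hp : (0:ℝ) < 1 + ρ := by linarith
  have hm : (0:ℝ) < 1 - ρ := by linarith
  have hld : Real.log ((1 + ρ) / 2) - Real.log ((1 - ρ) / 2)
      = Real.log ((1 + ρ) / (3 * (1 - ρ))) + Real.log 3 := by
    rw [Real.log_div (by positivity) (by norm_num),
        Real.log_div (by positivity) (by norm_num),
        Real.log_div (by positivity) (by positivity),
        Real.log_mul (by norm_num) (by positivity)]
    ring
  have hb : Real.log ((1 + ρ) / (3 * (1 - ρ))) ≤ (1 + ρ) / (3 * (1 - ρ)) - 1 :=
    Real.log_le_sub_one_of_pos (by positivity)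
  have hq1 : (1 + ρ) / (3 * (1 - ρ)) ≤ 1 := by
    rw [div_le_one (by positivity)]; linarith
  have hq2 : 2 * ρ / (1 + ρ) ≤ 2 / 3 := by
    rw [div_le_div_iff₀ hp (by norm_num)]; linarith
  have hq3 : (2 * ρ * (1 + ρ) - (1 + ρ ^ 2)) / (1 + ρ) ^ 2 ≤ 1 / 9 := by
    rw [div_le_div_iff₀ (by positivity) (by norm_num)]; nlinarith
  unfold psi''
  have hlog : Real.log ((1 + ρ) / 2) - Real.log ((1 - ρ) / 2) ≤ Real.log 3 := by
    rw [hld]; linarith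
  nlinarith [log3_lt]

lemma psi_zero : psi 0 = 0 := by unfold psi; norm_num

lemma psi'_zero_pos : 0 < psi' 0 := by
  unfold psi'
  norm_num
  have h1 : Real.log (2⁻¹ : ℝ) = -Real.log 2 := Real.log_inv 2
  have := Real.log_two_lt_d9
  nlinarith

lemma psi'_half_neg : psi' (1 / 2) < 0 := by
  unfold psi'
  have h34 : Real.log ((1 + (1:ℝ)/2) / 2) = Real.log 3 - 2 * Real.log 2 := by
    have h : ((1 + (1:ℝ)/2) / 2) = 3 / 4 := by norm_num
    rw [h, Real.log_div (by norm_num) (by norm_num)]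
    have h4 : (4:ℝ) = 2 ^ 2 := by norm_num
    rw [h4, Real.log_pow]; push_cast; ring
  have h14 : Real.log ((1 - (1:ℝ)/2) / 2) = -(2 * Real.log 2) := by
    have h : ((1 - (1:ℝ)/2) / 2) = 1 / 4 := by norm_num
    rw [h, Real.log_div (by norm_num) (by norm_num)]
    have h4 : (4:ℝ) = 2 ^ 2 := by norm_num
    rw [h4, Real.log_pow]; push_cast; simp
  rw [h34, h14]
  have := Real.log_two_gt_d9
  nlinarith [log3_lt]

lemma psi_half_neg : psi (1 / 2) < 0 := by
  unfold psi
  have h34 : Real.log ((1 + (1:ℝ)/2) / 2) = Real.log 3 - 2 * Real.log 2 := by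
    have h : ((1 + (1:ℝ)/2) / 2) = 3 / 4 := by norm_num
    rw [h, Real.log_div (by norm_num) (by norm_num)]
    have h4 : (4:ℝ) = 2 ^ 2 := by norm_num
    rw [h4, Real.log_pow]; push_cast; ring
  have h14 : Real.log ((1 - (1:ℝ)/2) / 2) = -(2 * Real.log 2) := by
    have h : ((1 - (1:ℝ)/2) / 2) = 1 / 4 := by norm_num
    rw [h, Real.log_div (by norm_num) (by norm_num)]
    have h4 : (4:ℝ) = 2 ^ 2 := by norm_num
    rw [h4, Real.log_pow]; push_cast; simp
  rw [h34, h14]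
  have := Real.log_two_gt_d9
  nlinarith [log3_lt]

/-- `ψ(0) = 0`, `ψ` is first increasing then decreasing on `[0,1/2]`, and there is a
unique `ρ* ∈ (0,1/2)` with `ψ(ρ*) = 0` and `ψ ≥ 0` on `[0, ρ*]`. -/
theorem stmt4 :
    psi 0 = 0 ∧
    (∃ c ∈ Set.Icc (0 : ℝ) (1 / 2),
      MonotoneOn psi (Set.Icc 0 c) ∧ AntitoneOn psi (Set.Icc c (1 / 2))) ∧
    (∃! r : ℝ, r ∈ Set.Ioo (0 : ℝ) (1 / 2) ∧ psi r = 0 ∧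
      ∀ ρ ∈ Set.Icc (0 : ℝ) r, 0 ≤ psi ρ) := by
  have hmem : ∀ x : ℝ, x ∈ Set.Icc (0:ℝ) (1/2) → -1 < x ∧ x < 1 := by
    intro x hx; exact ⟨by linarith [hx.1], by linarith [hx.2]⟩
  have hcont' : ContinuousOn psi' (Set.Icc 0 (1/2)) := fun x hx =>
    ((hasDerivAt_psi' (hmem x hx).1 (hmem x hx).2).continuousAt).continuousWithinAt
  have hcont : ContinuousOn psi (Set.Icc 0 (1/2)) := fun x hx =>
    ((hasDerivAt_psi (hmem x hx).1 (hmem x hx).2).continuousAt).continuousWithinAt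
  have hanti' : StrictAntiOn psi' (Set.Icc 0 (1/2)) := by
    apply strictAntiOn_of_deriv_neg (convex_Icc _ _) hcont'
    intro x hx
    rw [interior_Icc] at hx
    rw [(hasDerivAt_psi' (by linarith [hx.1]) (by linarith [hx.2])).deriv]
    exact psi''_neg (le_of_lt hx.1) (le_of_lt hx.2)
  obtain ⟨c, hcIoo, hc0⟩ : ∃ c ∈ Set.Ioo (0:ℝ) (1/2), psi' c = 0 := by
    have h := intermediate_value_Ioo' (by norm_num : (0:ℝ) ≤ 1/2) hcont'
    obtain ⟨c, hc, hc'⟩ := h ⟨psi'_half_neg, psi'_zero_pos⟩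
    exact ⟨c, hc, hc'⟩
  have hcIcc : c ∈ Set.Icc (0:ℝ) (1/2) := ⟨le_of_lt hcIoo.1, le_of_lt hcIoo.2⟩
  have hpos : ∀ x ∈ Set.Icc (0:ℝ) (1/2), x < c → 0 < psi' x := by
    intro x hx hxc
    have := hanti' hx hcIcc hxc
    linarith [hc0 ▸ this]
  have hneg : ∀ x ∈ Set.Icc (0:ℝ) (1/2), c < x → psi' x < 0 := by
    intro x hx hcx
    have := hanti' hcIcc hx hcx
    linarith [hc0 ▸ this]
  have hsub1 : Set.Icc (0:ℝ) c ⊆ Set.Icc 0 (1/2) :=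
    Set.Icc_subset_Icc le_rfl hcIcc.2
  have hsub2 : Set.Icc c (1/2) ⊆ Set.Icc (0:ℝ) (1/2) :=
    Set.Icc_subset_Icc hcIcc.1 le_rfl
  have hmono : StrictMonoOn psi (Set.Icc 0 c) := by
    apply strictMonoOn_of_deriv_pos (convex_Icc _ _) (hcont.mono hsub1)
    intro x hx
    rw [interior_Icc] at hx
    have hx' : x ∈ Set.Icc (0:ℝ) (1/2) :=
      ⟨le_of_lt hx.1, le_of_lt (lt_of_lt_of_le hx.2 hcIcc.2)⟩
    rw [(hasDerivAt_psi (hmem x hx').1 (hmem x hx').2).deriv]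
    exact hpos x hx' hx.2
  have hanti : StrictAntiOn psi (Set.Icc c (1/2)) := by
    apply strictAntiOn_of_deriv_neg (convex_Icc _ _) (hcont.mono hsub2)
    intro x hx
    rw [interior_Icc] at hx
    have hx' : x ∈ Set.Icc (0:ℝ) (1/2) :=
      ⟨le_of_lt (lt_of_le_of_lt hcIcc.1 hx.1), le_of_lt hx.2⟩
    rw [(hasDerivAt_psi (hmem x hx').1 (hmem x hx').2).deriv]
    exact hneg x hx' hx.1
  have hpsic : 0 < psi c := by
    have := hmono (Set.left_mem_Icc.mpr hcIcc.1) (Set.right_mem_Icc.mpr hcIcc.1) hcIoo.1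
    rwa [psi_zero] at this
  obtain ⟨r, hrIoo, hr0⟩ : ∃ r ∈ Set.Ioo c (1/2), psi r = 0 := by
    have h := intermediate_value_Ioo' hcIcc.2 (hcont.mono hsub2)
    obtain ⟨r, hr, hr'⟩ := h ⟨psi_half_neg, hpsic⟩
    exact ⟨r, hr, hr'⟩
  have hrIcc : r ∈ Set.Icc c (1/2) := ⟨le_of_lt hrIoo.1, le_of_lt hrIoo.2⟩
  refine ⟨psi_zero, ⟨c, hcIcc, hmono.monotoneOn, hanti.antitoneOn⟩, ?_⟩
  refine ⟨r, ⟨⟨lt_trans hcIoo.1 hrIoo.1, hrIoo.2⟩, hr0, ?_⟩, ?_⟩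
  · intro ρ hρ
    rcases le_or_gt ρ c with h | h
    · have := hmono.monotoneOn (Set.left_mem_Icc.mpr hcIcc.1) ⟨hρ.1, h⟩ hρ.1
      rwa [psi_zero] at this
    · have hρ' : ρ ∈ Set.Icc c (1/2) := ⟨le_of_lt h, le_trans hρ.2 hrIcc.2⟩
      have := hanti.antitoneOn hρ' hrIcc hρ.2
      rwa [hr0] at this
  · rintro y ⟨hyIoo, hy0, -⟩
    rcases le_or_gt y c with h | h
    · exfalso
      have := hmono (Set.left_mem_Icc.mpr hcIcc.1) ⟨le_of_lt hyIoo.1, h⟩ hyIoo.1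
      rw [psi_zero, hy0] at this
      exact lt_irrefl 0 this
    · exact hanti.injOn ⟨le_of_lt h, le_of_lt hyIoo.2⟩ hrIcc (hy0.trans hr0.symm)
end

section
/- Fix ρ ∈ (0, ρ*], where ρ* ∈ (0,1/2) is the unique positive root of ψ(ρ) = (1+ρ²)log((1+ρ)/2) − (1−ρ)²log((1−ρ)/2). Define h(z) = (1−ρ)/((1+2ρz)(1−ρ−2ρz)) · ((1/2+ρz)log(1/2+ρz) + (1/2−ρz)log(1/2−ρz)) for z ∈ [−1/2, −1/4]. Then h is non-increasing on [−1/2, −1/4], and hence sup_{z∈[−1/2,−1/4]} h(z) = h(−1/2) = ((1−ρ)/2)log((1−ρ)/2) + ((1+ρ)/2)log((1+ρ)/2). -/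
noncomputable def h (ρ z : ℝ) : ℝ :=
  (1 - ρ) / ((1 + 2 * ρ * z) * (1 - ρ - 2 * ρ * z)) *
    ((1 / 2 + ρ * z) * Real.log (1 / 2 + ρ * z) +
     (1 / 2 - ρ * z) * Real.log (1 / 2 - ρ * z))

open Set

/-- Auxiliary function: `-h'(z) · (1+2ρz)²(1-ρ-2ρz)² / (ρ(1-ρ))`. -/
noncomputable def phi (ρ z : ℝ) : ℝ :=
  ((1 - 2 * ρ * z) ^ 2 - 2 * ρ) * Real.log (1 / 2 - ρ * z)
    - (1 + 2 * ρ * z) ^ 2 * Real.log (1 / 2 + ρ * z)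

private lemma log3_le : Real.log 3 ≤ 1.104 := by
  have he : (2.7182818283:ℝ) < Real.exp 1 := Real.exp_one_gt_d9
  have hep : (0:ℝ) < Real.exp 1 := Real.exp_pos 1
  have h1 : Real.log (3 / Real.exp 1) ≤ 3 / Real.exp 1 - 1 :=
    Real.log_le_sub_one_of_pos (by positivity)
  rw [Real.log_div (by norm_num) (Real.exp_ne_zero 1), Real.log_exp] at h1
  have h2 : 3 / Real.exp 1 ≤ 1.104 := by
    rw [div_le_iff₀ hep]; nlinarith
  linarith

private lemma entropy_le {b : ℝ} (h1 : 1/2 ≤ b) (h2 : b ≤ 3/4) :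
    (1 - b) * Real.log (1 - b) + b * Real.log b ≤ -(1/2) := by
  have hseg : b ∈ segment ℝ (1/2 : ℝ) (3/4 : ℝ) := by
    rw [segment_eq_Icc (by norm_num : (1/2:ℝ) ≤ 3/4)]; exact ⟨h1, h2⟩
  obtain ⟨u, v, hu, hv, huv, hb⟩ := hseg
  have f := Real.convexOn_mul_log
  have c1 : (u • (1/2:ℝ) + v • (3/4:ℝ)) * Real.log (u • (1/2:ℝ) + v • (3/4:ℝ)) ≤
      u • ((1/2:ℝ) * Real.log (1/2)) + v • ((3/4:ℝ) * Real.log (3/4)) :=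
    f.2 (by norm_num) (by norm_num) hu hv huv
  have c2 : (u • (1/2:ℝ) + v • (1/4:ℝ)) * Real.log (u • (1/2:ℝ) + v • (1/4:ℝ)) ≤
      u • ((1/2:ℝ) * Real.log (1/2)) + v • ((1/4:ℝ) * Real.log (1/4)) :=
    f.2 (by norm_num) (by norm_num) hu hv huv
  have hb' : (1:ℝ) - b = u • (1/2:ℝ) + v • (1/4:ℝ) := by
    simp only [smul_eq_mul] at hb ⊢; linarith
  rw [hb] at c1
  rw [← hb'] at c2
  simp only [smul_eq_mul] at c1 c2
  have l2 : (0.6931471803:ℝ) < Real.log 2 := Real.log_two_gt_d9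
  have l3 : Real.log 3 ≤ 1.104 := log3_le
  have e12 : Real.log (1/2 : ℝ) = -Real.log 2 := by
    rw [Real.log_div one_ne_zero two_ne_zero, Real.log_one]; ring
  have e14 : Real.log (1/4 : ℝ) = -(2 * Real.log 2) := by
    rw [show (1/4:ℝ) = (1/2)^2 by norm_num, Real.log_pow, e12]; push_cast; ring
  have e34 : Real.log (3/4 : ℝ) = Real.log 3 - 2 * Real.log 2 := by
    rw [Real.log_div (by norm_num) (by norm_num),
      show (4:ℝ) = 2^2 by norm_num, Real.log_pow]; push_cast; ring
  rw [e12, e14] at c2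
  rw [e12, e34] at c1
  nlinarith [hu, hv, huv]

private lemma psi_pos_small {t : ℝ} (ht : 0 < t) (ht5 : t ≤ 1/5) : 0 < psi t := by
  have h1t : (0:ℝ) < 1 + t := by linarith
  have h1t' : (0:ℝ) < 1 - t := by linarith
  have A : 1 - (1+t)⁻¹ ≤ Real.log (1+t) := Real.one_sub_inv_le_log_of_pos h1t
  have B : (1+t) * (1+t)⁻¹ = 1 := mul_inv_cancel₀ h1t.ne'
  have hlow : t - t^2 ≤ Real.log (1+t) := by nlinarith [pow_pos ht 3]
  have hup : Real.log (1-t) ≤ -t := by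
    have := Real.log_le_sub_one_of_pos h1t'; linarith
  have l2 : Real.log 2 < 0.6931471808 := Real.log_two_lt_d9
  have l2' : (0:ℝ) < Real.log 2 := Real.log_pos (by norm_num)
  unfold psi
  rw [Real.log_div (by linarith) two_ne_zero, Real.log_div (by linarith) two_ne_zero]
  nlinarith [mul_nonneg (by positivity : (0:ℝ) ≤ 1 + t^2)
      (by linarith : 0 ≤ Real.log (1+t) - (t - t^2)),
    mul_nonneg (sq_nonneg (1-t)) (by linarith : 0 ≤ -t - Real.log (1-t)),
    sq_nonneg t, mul_pos ht ht]

private lemma psi_nonneg {ρ ρs : ℝ} (hρs : ρs ∈ Set.Ioo (0:ℝ) (1/2))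
    (huniq : ∀ r ∈ Set.Ioo (0:ℝ) (1/2), psi r = 0 → r = ρs)
    (hρ : ρ ∈ Set.Ioc (0:ℝ) ρs) : 0 ≤ psi ρ := by
  by_contra hneg
  push_neg at hneg
  have hρ0 := hρ.1
  have hρhalf : ρ < 1/2 := lt_of_le_of_lt hρ.2 hρs.2
  have h5 : 1/5 < ρ := by
    by_contra hle; push_neg at hle
    exact absurd (psi_pos_small hρ0 hle) (by linarith)
  have hcont : ContinuousOn psi (Icc (1/5 : ℝ) ρ) := by
    unfold psi
    apply ContinuousOn.sub
    · apply ContinuousOn.mul (by fun_prop)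
      apply ContinuousOn.log (by fun_prop)
      intro x hx
      have := hx.1
      positivity
    · apply ContinuousOn.mul (by fun_prop)
      apply ContinuousOn.log (by fun_prop)
      intro x hx
      have h1 := hx.1; have h2 := hx.2
      have : (0:ℝ) < (1 - x) / 2 := by nlinarith
      exact this.ne'
  have hps : 0 < psi (1/5) := psi_pos_small (by norm_num) (le_refl _)
  have h0mem : (0:ℝ) ∈ Ioo (psi ρ) (psi (1/5)) := ⟨hneg, hps⟩
  obtain ⟨t, ht, hpt⟩ := intermediate_value_Ioo' (le_of_lt h5) hcont h0mem
  have hts : t = ρs := huniq t ⟨by linarith [ht.1], by linarith [ht.2]⟩ hpt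
  have := ht.2
  have := hρ.2
  linarith

private lemma hasDerivAt_phi (ρ : ℝ) {z : ℝ} (ha : 0 < 1 / 2 + ρ * z)
    (hb : 0 < 1 / 2 - ρ * z) :
    HasDerivAt (phi ρ)
      (-ρ * (8 * ((1 / 2 + ρ * z) * Real.log (1 / 2 + ρ * z)
          + (1 / 2 - ρ * z) * Real.log (1 / 2 - ρ * z)) + 4 - 2 * ρ / (1 / 2 - ρ * z))) z := by
  have hA : HasDerivAt (fun z : ℝ => 1 / 2 + ρ * z) ρ z := by
    simpa only [mul_one, id_eq] using ((hasDerivAt_id z).const_mul ρ).const_add (1 / 2 : ℝ)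
  have hB : HasDerivAt (fun z : ℝ => 1 / 2 - ρ * z) (-ρ) z := by
    simpa only [mul_one, id_eq] using ((hasDerivAt_id z).const_mul ρ).const_sub (1 / 2 : ℝ)
  have hLa : HasDerivAt (fun z : ℝ => Real.log (1 / 2 + ρ * z)) (ρ / (1 / 2 + ρ * z)) z :=
    hA.log ha.ne'
  have hLb : HasDerivAt (fun z : ℝ => Real.log (1 / 2 - ρ * z)) (-ρ / (1 / 2 - ρ * z)) z :=
    hB.log hb.ne'
  have hP : HasDerivAt (fun z : ℝ => 1 - 2 * ρ * z) (-(2 * ρ)) z := by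
    simpa only [mul_one, id_eq] using ((hasDerivAt_id z).const_mul (2 * ρ)).const_sub (1 : ℝ)
  have hQ : HasDerivAt (fun z : ℝ => 1 + 2 * ρ * z) (2 * ρ) z := by
    simpa only [mul_one, id_eq] using ((hasDerivAt_id z).const_mul (2 * ρ)).const_add (1 : ℝ)
  have hC : HasDerivAt (fun z : ℝ => (1 - 2 * ρ * z) ^ 2 - 2 * ρ)
      ((2 : ℕ) * (1 - 2 * ρ * z) ^ 1 * (-(2 * ρ))) z := (hP.pow 2).sub_const (2 * ρ)
  have hQ2 : HasDerivAt (fun z : ℝ => (1 + 2 * ρ * z) ^ 2)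
      ((2 : ℕ) * (1 + 2 * ρ * z) ^ 1 * (2 * ρ)) z := hQ.pow 2
  have htot := (hC.mul hLb).sub (hQ2.mul hLa)
  refine htot.congr_deriv (Eq.symm ?_)
  have h1 : (1 / 2 + ρ * z) ≠ 0 := ha.ne'
  have h2 : (1 / 2 - ρ * z) ≠ 0 := hb.ne'
  have hw : (1 / 2 - ρ * z) * (1 / 2 - ρ * z)⁻¹ = 1 := mul_inv_cancel₀ h2
  have hv : (1 / 2 + ρ * z) * (1 / 2 + ρ * z)⁻¹ = 1 := mul_inv_cancel₀ h1
  push_cast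
  linear_combination (4 * ρ * (1 / 2 - ρ * z)) * hw + (4 * ρ * (1 / 2 + ρ * z)) * hv

private lemma hasDerivAt_h (ρ : ℝ) {z : ℝ} (ha : 0 < 1 / 2 + ρ * z)
    (hb : 0 < 1 / 2 - ρ * z) (hQp : 0 < 1 + 2 * ρ * z) (hRp : 0 < 1 - ρ - 2 * ρ * z) :
    HasDerivAt (h ρ)
      (-(ρ * (1 - ρ) * phi ρ z) / ((1 + 2 * ρ * z) * (1 - ρ - 2 * ρ * z)) ^ 2) z := by
  have hA : HasDerivAt (fun z : ℝ => 1 / 2 + ρ * z) ρ z := by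
    simpa only [mul_one, id_eq] using ((hasDerivAt_id z).const_mul ρ).const_add (1 / 2 : ℝ)
  have hB : HasDerivAt (fun z : ℝ => 1 / 2 - ρ * z) (-ρ) z := by
    simpa only [mul_one, id_eq] using ((hasDerivAt_id z).const_mul ρ).const_sub (1 / 2 : ℝ)
  have hLa : HasDerivAt (fun z : ℝ => Real.log (1 / 2 + ρ * z)) (ρ / (1 / 2 + ρ * z)) z :=
    hA.log ha.ne'
  have hLb : HasDerivAt (fun z : ℝ => Real.log (1 / 2 - ρ * z)) (-ρ / (1 / 2 - ρ * z)) z :=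
    hB.log hb.ne'
  have hQ : HasDerivAt (fun z : ℝ => 1 + 2 * ρ * z) (2 * ρ) z := by
    simpa only [mul_one, id_eq] using ((hasDerivAt_id z).const_mul (2 * ρ)).const_add (1 : ℝ)
  have hR : HasDerivAt (fun z : ℝ => 1 - ρ - 2 * ρ * z) (-(2 * ρ)) z := by
    simpa only [mul_one, id_eq] using ((hasDerivAt_id z).const_mul (2 * ρ)).const_sub (1 - ρ)
  have hD := hQ.mul hR
  have hfrac := (hasDerivAt_const z (1 - ρ)).div hD (mul_pos hQp hRp).ne'
  have hE := (hA.mul hLa).add (hB.mul hLb)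
  have htot := hfrac.mul hE
  refine htot.congr_deriv (Eq.symm ?_)
  simp only [Pi.mul_apply, Pi.div_apply, Pi.add_apply]
  have h1 : (1 / 2 + ρ * z) ≠ 0 := ha.ne'
  have h2 : (1 / 2 - ρ * z) ≠ 0 := hb.ne'
  have hDne : ((1 + 2 * ρ * z) * (1 - ρ - 2 * ρ * z)) ≠ 0 := (mul_pos hQp hRp).ne'
  unfold phi
  rw [show (1 / 2 + ρ * z) * (ρ / (1 / 2 + ρ * z)) = ρ from by
      rw [mul_comm, div_mul_cancel₀ _ h1],
    show (1 / 2 - ρ * z) * (-ρ / (1 / 2 - ρ * z)) = -ρ from by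
      rw [mul_comm, div_mul_cancel₀ _ h2]]
  rw [div_mul_eq_mul_div, div_mul_eq_mul_div, div_add_div _ _ (pow_ne_zero 2 hDne) hDne,
    div_eq_div_iff (by positivity) (by positivity)]
  ring

/-- For `ρ ∈ (0, ρ*]`, where `ρ*` is the unique positive root of `ψ` in `(0,1/2)`,
the function `h` is non-increasing on `[-1/2, -1/4]`, its supremum there is
`h(-1/2)`, and `h(-1/2) = ((1-ρ)/2)log((1-ρ)/2) + ((1+ρ)/2)log((1+ρ)/2)`. -/
theorem stmt7 (ρ ρs : ℝ) (hρs : ρs ∈ Set.Ioo (0 : ℝ) (1 / 2)) (hroot : psi ρs = 0)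
    (huniq : ∀ r ∈ Set.Ioo (0 : ℝ) (1 / 2), psi r = 0 → r = ρs)
    (hρ : ρ ∈ Set.Ioc (0 : ℝ) ρs) :
    AntitoneOn (h ρ) (Set.Icc (-(1 / 2) : ℝ) (-(1 / 4))) ∧
    (∀ z ∈ Set.Icc (-(1 / 2) : ℝ) (-(1 / 4)), h ρ z ≤ h ρ (-(1 / 2))) ∧
    h ρ (-(1 / 2)) =
      ((1 - ρ) / 2) * Real.log ((1 - ρ) / 2) + ((1 + ρ) / 2) * Real.log ((1 + ρ) / 2) := by
  obtain ⟨hρ0, hρle⟩ := hρ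
  have hρhalf : ρ < 1/2 := lt_of_le_of_lt hρle hρs.2
  have hfacts : ∀ z ∈ Set.Icc (-(1/2) : ℝ) (-(1/4)),
      0 < 1/2 + ρ*z ∧ 0 < 1/2 - ρ*z ∧ 0 < 1 + 2*ρ*z ∧ 0 < 1 - ρ - 2*ρ*z := by
    intro z hz
    obtain ⟨hz1, hz2⟩ := hz
    have h1 : ρ * (-(1/2)) ≤ ρ * z := by nlinarith
    have h2 : ρ * z ≤ ρ * (-(1/4)) := by nlinarith
    refine ⟨by nlinarith, by nlinarith, by nlinarith, by nlinarith⟩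
  have hphi_half : phi ρ (-(1/2)) = psi ρ := by
    unfold phi psi
    rw [show (1:ℝ)/2 - ρ * (-(1/2)) = (1+ρ)/2 by ring,
      show (1:ℝ)/2 + ρ * (-(1/2)) = (1-ρ)/2 by ring]
    ring
  have hpsi : 0 ≤ psi ρ := psi_nonneg hρs huniq ⟨hρ0, hρle⟩
  have hmem0 : (-(1/2) : ℝ) ∈ Set.Icc (-(1/2) : ℝ) (-(1/4)) := ⟨le_refl _, by norm_num⟩
  have hmono : MonotoneOn (phi ρ) (Set.Icc (-(1/2) : ℝ) (-(1/4))) := by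
    apply monotoneOn_of_deriv_nonneg (convex_Icc _ _)
    · intro z hz
      obtain ⟨ha, hb, -, -⟩ := hfacts z hz
      exact (hasDerivAt_phi ρ ha hb).differentiableAt.continuousAt.continuousWithinAt
    · rw [interior_Icc]
      intro z hz
      obtain ⟨ha, hb, -, -⟩ := hfacts z (Ioo_subset_Icc_self hz)
      exact (hasDerivAt_phi ρ ha hb).differentiableAt.differentiableWithinAt
    · rw [interior_Icc]
      intro z hz
      obtain ⟨ha, hb, -, -⟩ := hfacts z (Ioo_subset_Icc_self hz)
      rw [(hasDerivAt_phi ρ ha hb).deriv]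
      have hz1 := hz.1; have hz2 := hz.2
      have hE : (1/2 + ρ*z) * Real.log (1/2 + ρ*z) + (1/2 - ρ*z) * Real.log (1/2 - ρ*z)
          ≤ -(1/2) := by
        have hb1 : 1/2 ≤ 1/2 - ρ*z := by nlinarith
        have hb2 : 1/2 - ρ*z ≤ 3/4 := by nlinarith
        have := entropy_le hb1 hb2
        rwa [show (1:ℝ) - (1/2 - ρ*z) = 1/2 + ρ*z by ring] at this
      have hposb : 0 < 2*ρ/(1/2 - ρ*z) := by positivity
      nlinarith
  have hphinn : ∀ z ∈ Set.Icc (-(1/2) : ℝ) (-(1/4)), 0 ≤ phi ρ z := by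
    intro z hz
    have := hmono hmem0 hz hz.1
    rw [hphi_half] at this
    linarith
  have hanti : AntitoneOn (h ρ) (Set.Icc (-(1/2) : ℝ) (-(1/4))) := by
    apply antitoneOn_of_deriv_nonpos (convex_Icc _ _)
    · intro z hz
      obtain ⟨ha, hb, hc, hd⟩ := hfacts z hz
      exact (hasDerivAt_h ρ ha hb hc hd).differentiableAt.continuousAt.continuousWithinAt
    · rw [interior_Icc]
      intro z hz
      obtain ⟨ha, hb, hc, hd⟩ := hfacts z (Ioo_subset_Icc_self hz)
      exact (hasDerivAt_h ρ ha hb hc hd).differentiableAt.differentiableWithinAt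
    · rw [interior_Icc]
      intro z hz
      obtain ⟨ha, hb, hc, hd⟩ := hfacts z (Ioo_subset_Icc_self hz)
      rw [(hasDerivAt_h ρ ha hb hc hd).deriv]
      apply div_nonpos_of_nonpos_of_nonneg
      · have h0 : 0 ≤ ρ * (1 - ρ) * phi ρ z :=
          mul_nonneg (mul_nonneg hρ0.le (by linarith)) (hphinn z (Ioo_subset_Icc_self hz))
        linarith
      · positivity
  refine ⟨hanti, fun z hz => hanti hmem0 hz hz.1, ?_⟩
  unfold h
  rw [show (1:ℝ) + 2*ρ*(-(1/2)) = 1 - ρ by ring, show (1:ℝ) - ρ - 2*ρ*(-(1/2)) = 1 by ring,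
    show (1:ℝ)/2 + ρ*(-(1/2)) = (1-ρ)/2 by ring, show (1:ℝ)/2 - ρ*(-(1/2)) = (1+ρ)/2 by ring]
  have hne : (1:ℝ) - ρ ≠ 0 := by intro hc; rw [sub_eq_zero] at hc; linarith
  field_simp
end

section
/- Let Φ : [0,1] → ℝ be continuous and strictly convex, ρ ∈ (0,1), a ∈ (0,1). Suppose (S,Z) is a pair of random variables with S ∈ {-a, 1-a}, P(S = 1−a) = a, 0 ≤ a + ρZ ≤ 1 a.s., E[Z] = 0, and E[Z²] < E[SZ], and suppose there exists z* in the support of Z with 0 < a + ρz* < 1. Then (S,Z) does not maximize E[Φ(a+ρZ)] among all such pairs: there exists another feasible pair (S,Z') with the same marginal for S satisfying E[Φ(a+ρZ')] > E[Φ(a+ρZ)]. -/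
/-!
Splitting the mass at `z*` into equal halves at `z* ± δ` keeps the total mass, `P(S = 1 - a)`,
`E[Z]` and `E[SZ]`, and raises `E[Z²]` only by `p(z*) δ²`, which the strict slack
`E[Z²] < E[SZ]` absorbs for small `δ`. Since `0 < a + ρz* < 1`, both new atoms stay feasible
for small `δ`, and strict convexity of `Φ` makes `E[Φ(a + ρZ)]` strictly larger.
-/

open Finset

/-- A finitely supported joint distribution of `(S, Z)` given by atoms
`(s i, z i)` with weights `p i`, feasible for the optimization in
Theorem 2 of the paper: `S ∈ {-a, 1-a}`, `P(S = 1-a) = a`, `0 ≤ a + ρZ ≤ 1`,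
`E[Z] = 0`, and `E[Z²] ≤ E[SZ]`. -/
def Feasible (a ρ : ℝ) {m : ℕ} (s z p : Fin m → ℝ) : Prop :=
  (∀ i, 0 ≤ p i) ∧ (∑ i, p i = 1) ∧
  (∀ i, s i = -a ∨ s i = 1 - a) ∧
  (∑ i ∈ Finset.univ.filter (fun i => s i = 1 - a), p i = a) ∧
  (∀ i, 0 ≤ a + ρ * z i ∧ a + ρ * z i ≤ 1) ∧
  (∑ i, p i * z i = 0) ∧
  (∑ i, p i * (z i) ^ 2 ≤ ∑ i, p i * (s i * z i))

theorem StrictConvexOn.two_mul_lt_add {s : Set ℝ} {f : ℝ → ℝ} (hf : StrictConvexOn ℝ s f)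
    {x h : ℝ} (hxh : x - h ∈ s) (hxh' : x + h ∈ s) (h0 : h ≠ 0) :
    2 * f x < f (x - h) + f (x + h) := by
  have := hf.2 hxh hxh' (by intro e; apply h0; linarith) (by norm_num : (0 : ℝ) < 1 / 2)
    (by norm_num : (0 : ℝ) < 1 / 2) (by norm_num)
  simp only [smul_eq_mul, show 1 / 2 * (x - h) + 1 / 2 * (x + h) = x by ring] at this
  linarith

theorem Fin.forall_snoc_update {α : Type*} {P : α → Prop} {m : ℕ} {f : Fin m → α} {i₀ : Fin m}
    {b c : α} (hf : ∀ i, P (f i)) (hb : P b) (hc : P c) (i : Fin (m + 1)) :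
    P (Fin.snoc (α := fun _ => α) (Function.update f i₀ b) c i) := by
  induction i using Fin.lastCases with
  | last => simpa using hc
  | cast i =>
    rw [Fin.snoc_castSucc, Function.update_apply]
    split_ifs
    exacts [hb, hf i]

section SplitAtom

variable {m : ℕ}

noncomputable def splitMass (p : Fin m → ℝ) (i₀ : Fin m) : Fin (m + 1) → ℝ :=
  Fin.snoc (Function.update p i₀ (p i₀ / 2)) (p i₀ / 2)

noncomputable def spreadAt (z : Fin m → ℝ) (i₀ : Fin m) (δ : ℝ) : Fin (m + 1) → ℝ :=
  Fin.snoc (Function.update z i₀ (z i₀ + δ)) (z i₀ - δ)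

theorem sum_splitMass_mul (s z p : Fin m → ℝ) (i₀ : Fin m) (δ : ℝ) (F : ℝ → ℝ → ℝ) :
    ∑ i, splitMass p i₀ i * F (spreadAt s i₀ 0 i) (spreadAt z i₀ δ i) =
      ∑ i, p i * F (s i) (z i) +
        p i₀ / 2 * (F (s i₀) (z i₀ + δ) + F (s i₀) (z i₀ - δ) - 2 * F (s i₀) (z i₀)) := by
  have hcast : ∀ i, splitMass p i₀ i.castSucc * F (spreadAt s i₀ 0 i.castSucc)
      (spreadAt z i₀ δ i.castSucc) = p i * F (s i) (z i) +
        if i = i₀ then p i₀ / 2 * F (s i₀) (z i₀ + δ) - p i₀ * F (s i₀) (z i₀) else 0 := by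
    intro i
    simp only [splitMass, spreadAt, Fin.snoc_castSucc, Function.update_apply, add_zero]
    split_ifs with h
    · subst h; ring
    · ring
  rw [Fin.sum_univ_castSucc]
  simp only [hcast, sum_add_distrib, sum_ite_eq', mem_univ, if_true]
  simp only [splitMass, spreadAt, Fin.snoc_last, sub_zero]
  ring

end SplitAtom

theorem Feasible.split {m : ℕ} {a ρ : ℝ} {s z p : Fin m → ℝ} (h : Feasible a ρ s z p)
    {i₀ : Fin m} {δ : ℝ}
    (hplus : a + ρ * (z i₀ + δ) ∈ Set.Icc 0 1) (hminus : a + ρ * (z i₀ - δ) ∈ Set.Icc 0 1)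
    (hslack : p i₀ * δ ^ 2 ≤ ∑ i, p i * (s i * z i) - ∑ i, p i * z i ^ 2) :
    Feasible a ρ (spreadAt s i₀ 0) (spreadAt z i₀ δ) (splitMass p i₀) := by
  obtain ⟨hp, hmass, hs, hprob, hbd, hmean, -⟩ := h
  have hsplit := sum_splitMass_mul s z p i₀ δ
  have hp₀ : 0 ≤ p i₀ / 2 := by linarith [hp i₀]
  refine ⟨Fin.forall_snoc_update hp hp₀ hp₀, ?_,
    Fin.forall_snoc_update (P := fun w => w = -a ∨ w = 1 - a) hs
      (by simpa using hs i₀) (by simpa using hs i₀), ?_,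
    Fin.forall_snoc_update (P := fun w => 0 ≤ a + ρ * w ∧ a + ρ * w ≤ 1) hbd hplus hminus, ?_, ?_⟩
  · have h1 := hsplit fun _ _ => 1
    simp only [mul_one] at h1
    rw [h1, hmass]
    ring
  · have h1 := hsplit fun w _ => if w = 1 - a then 1 else 0
    simp only [mul_boole] at h1
    rw [sum_filter, h1, ← sum_filter, hprob]
    split_ifs <;> ring
  · have hz := hsplit fun _ z => z
    rw [hz, hmean]
    ring
  · have hz2 := hsplit fun _ z => z ^ 2
    have hsz := hsplit fun s z => s * z
    rw [hz2, hsz]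
    linear_combination hslack

open Filter Topology

theorem stmt16_general (Φ : ℝ → ℝ)
    (hconv : StrictConvexOn ℝ (Set.Icc (0 : ℝ) 1) Φ)
    (a ρ : ℝ) (hρ : ρ ∈ Set.Ioo (0 : ℝ) 1)
    {m : ℕ} (s z p : Fin m → ℝ) (hfeas : Feasible a ρ s z p)
    (hstrict : ∑ i, p i * (z i) ^ 2 < ∑ i, p i * (s i * z i))
    (hint : ∃ i, 0 < p i ∧ 0 < a + ρ * z i ∧ a + ρ * z i < 1) :
    ∃ (m' : ℕ) (s' z' p' : Fin m' → ℝ), Feasible a ρ s' z' p' ∧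
      ∑ i, p i * Φ (a + ρ * z i) < ∑ i, p' i * Φ (a + ρ * z' i) := by
  obtain ⟨i₀, hp₀, hx₀⟩ := hint
  have hnear : ∀ᶠ δ in 𝓝 (0 : ℝ), a + ρ * (z i₀ + δ) ∈ Set.Ioo 0 1 ∧
      a + ρ * (z i₀ - δ) ∈ Set.Ioo 0 1 ∧
      p i₀ * δ ^ 2 ∈ Set.Iio (∑ i, p i * (s i * z i) - ∑ i, p i * z i ^ 2) := by
    refine .and ?_ (.and ?_ ?_) <;> refine ContinuousAt.eventually_mem (by fun_prop) ?_
    · simpa using isOpen_Ioo.mem_nhds hx₀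
    · simpa using isOpen_Ioo.mem_nhds hx₀
    · simpa using isOpen_Iio.mem_nhds (sub_pos.mpr hstrict)
  obtain ⟨δ, ⟨hplus, hminus, hslack⟩, hδ⟩ :=
    ((hnear.filter_mono nhdsWithin_le_nhds).and (self_mem_nhdsWithin (s := Set.Ioi 0))).exists
  refine ⟨m + 1, _, _, _, hfeas.split (Set.Ioo_subset_Icc_self hplus)
    (Set.Ioo_subset_Icc_self hminus) (le_of_lt hslack), ?_⟩
  rw [sum_splitMass_mul s z p i₀ δ fun _ z => Φ (a + ρ * z)]
  have hconvex := hconv.two_mul_lt_add (x := a + ρ * z i₀) (h := ρ * δ)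
    (by convert Set.Ioo_subset_Icc_self hminus using 1; ring)
    (by convert Set.Ioo_subset_Icc_self hplus using 1; ring) (mul_pos hρ.1 hδ).ne'
  rw [show a + ρ * z i₀ - ρ * δ = a + ρ * (z i₀ - δ) by ring,
    show a + ρ * z i₀ + ρ * δ = a + ρ * (z i₀ + δ) by ring] at hconvex
  have hgain := mul_pos (half_pos hp₀) (by linarith : 0 < Φ (a + ρ * (z i₀ + δ)) +
    Φ (a + ρ * (z i₀ - δ)) - 2 * Φ (a + ρ * z i₀))
  linarith

/-- If a feasible pair has strict slack `E[Z²] < E[SZ]` and an atom with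
`0 < a + ρz* < 1`, then it does not maximize `E[Φ(a + ρZ)]`: some feasible pair
does strictly better. -/
theorem stmt16 (Φ : ℝ → ℝ) (hcont : ContinuousOn Φ (Set.Icc 0 1))
    (hconv : StrictConvexOn ℝ (Set.Icc (0 : ℝ) 1) Φ)
    (a ρ : ℝ) (ha : a ∈ Set.Ioo (0 : ℝ) 1) (hρ : ρ ∈ Set.Ioo (0 : ℝ) 1)
    {m : ℕ} (s z p : Fin m → ℝ) (hfeas : Feasible a ρ s z p)
    (hstrict : ∑ i, p i * (z i) ^ 2 < ∑ i, p i * (s i * z i))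
    (hint : ∃ i, 0 < p i ∧ 0 < a + ρ * z i ∧ a + ρ * z i < 1) :
    ∃ (m' : ℕ) (s' z' p' : Fin m' → ℝ), Feasible a ρ s' z' p' ∧
      ∑ i, p i * Φ (a + ρ * z i) < ∑ i, p' i * Φ (a + ρ * z' i) :=
  stmt16_general Φ hconv a ρ hρ s z p hfeas hstrict hint
end

section
/- Let Φ : [0,1] → ℝ be convex and ρ, a ∈ (0,1). Consider any finitely supported joint distribution of (S,Z) with S ∈ {-a,1-a}, P(S=1-a)=a, 0 ≤ a+ρZ ≤ 1 a.s., E[Z]=0, and E[Z²] = E[SZ]. Suppose the support contains points (−a, z₋) and (1−a, z₊) with z₋ > −a/ρ, z₊ < (1−a)/ρ, and z₊ < z₋ + 1/2. Then the distribution does not maximize E[Φ(a+ρZ)] among all feasible distributions: a strictly better feasible distribution exists (assuming Φ is strictly convex). -/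
open Finset

lemma key_ineq {Φ : ℝ → ℝ} (hconv : StrictConvexOn ℝ (Set.Icc (0:ℝ) 1) Φ)
    {u x y t : ℝ} (hu : 0 ≤ u) (ht : t ≤ 1) (hux : u < x) (hxy : x ≤ y) (hyt : y < t)
    (hw : x - u = t - y) : Φ x + Φ y < Φ u + Φ t := by
  have hut : u < t := lt_of_lt_of_le hux (le_trans hxy hyt.le)
  have hden : 0 < t - u := by linarith
  have hmemu : u ∈ Set.Icc (0:ℝ) 1 := ⟨hu, by linarith⟩
  have hmemt : t ∈ Set.Icc (0:ℝ) 1 := ⟨by linarith, ht⟩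
  set L : ℝ := (t - x)/(t - u) with hLdef
  have h0L : 0 < L := div_pos (by linarith) hden
  have hL1 : L < 1 := (div_lt_one hden).mpr (by linarith)
  have hLm : L * (t - u) = t - x := by rw [hLdef]; field_simp [hden.ne']
  have hx : L*u + (1-L)*t = x := by linear_combination (-1 : ℝ) * hLm
  have hy : (1-L)*u + L*t = y := by
    have hyeq : y = u + t - x := by linarith
    linear_combination hLm - hyeq
  have hA := hconv.2 hmemu hmemt (ne_of_lt hut) h0L
    (show (0:ℝ) < 1 - L by linarith) (show L + (1 - L) = 1 by ring)
  have hB := hconv.2 hmemu hmemt (ne_of_lt hut)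
    (show (0:ℝ) < 1 - L by linarith) h0L (show 1 - L + L = 1 by ring)
  simp only [smul_eq_mul] at hA hB
  rw [hx] at hA
  rw [hy] at hB
  have e : L*Φ u + (1-L)*Φ t + ((1-L)*Φ u + L*Φ t) = Φ u + Φ t := by ring
  linarith

set_option maxHeartbeats 4000000 in
/-- If a feasible distribution with `E[Z²] = E[SZ]` has support points `(-a, z₋)`
and `(1-a, z₊)` with `z₋ > -a/ρ`, `z₊ < (1-a)/ρ` and `z₊ < z₋ + 1/2`, then it does
not maximize `E[Φ(a + ρZ)]` over feasible distributions (for strictly convex `Φ`). -/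
theorem stmt17 (Φ : ℝ → ℝ) (hconv : StrictConvexOn ℝ (Set.Icc (0 : ℝ) 1) Φ)
    (a ρ : ℝ) (ha : a ∈ Set.Ioo (0 : ℝ) 1) (hρ : ρ ∈ Set.Ioo (0 : ℝ) 1)
    {m : ℕ} (s z p : Fin m → ℝ) (hfeas : Feasible a ρ s z p)
    (heq : ∑ i, p i * (z i) ^ 2 = ∑ i, p i * (s i * z i))
    (zm zp : ℝ)
    (hzm : ∃ i, 0 < p i ∧ s i = -a ∧ z i = zm)
    (hzp : ∃ i, 0 < p i ∧ s i = 1 - a ∧ z i = zp)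
    (h1 : -a / ρ < zm) (h2 : zp < (1 - a) / ρ) (h3 : zp < zm + 1 / 2) :
    ∃ (m' : ℕ) (s' z' p' : Fin m' → ℝ), Feasible a ρ s' z' p' ∧
      ∑ i, p i * Φ (a + ρ * z i) < ∑ i, p' i * Φ (a + ρ * z' i) := by
  obtain ⟨ha0, ha1⟩ := ha
  obtain ⟨hρ0, hρ1⟩ := hρ
  obtain ⟨i₁, hpi1, hsi1, hzi1⟩ := hzm
  obtain ⟨i₂, hpi2, hsi2, hzi2⟩ := hzp
  obtain ⟨hp0, hpsum, hsval, hfil, hbox, hEZ, hQ⟩ := hfeas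
  have hsne : ¬((-a : ℝ) = 1 - a) := by intro h; linarith
  have hne : i₁ ≠ i₂ := fun h => hsne (by rw [← hsi1, h, hsi2])
  rw [Finset.sum_filter] at hfil
  have hfil' : ∑ i, p i * (if s i = 1 - a then (1:ℝ) else 0) = a := by
    have e : (∑ i, p i * (if s i = 1 - a then (1:ℝ) else 0))
        = ∑ i, if s i = 1 - a then p i else 0 :=
      Finset.sum_congr rfl fun i _ => by split_ifs <;> ring
    rw [e]; exact hfil
  have conv1 : ∀ q : Fin m → ℝ, (∑ i, if s i = 1 - a then q i else 0)
      = ∑ i, q i * (if s i = 1 - a then (1:ℝ) else 0) :=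
    fun q => Finset.sum_congr rfl fun i _ => by split_ifs <;> ring
  have hxm1 : a + ρ * zm ≤ 1 := by have := (hbox i₁).2; rwa [hzi1] at this
  have hxm0 : 0 < a + ρ * zm := by
    have := (div_lt_iff₀ hρ0).mp h1
    nlinarith
  have hxp0 : 0 ≤ a + ρ * zp := by have := (hbox i₂).1; rwa [hzi2] at this
  have hxp1 : a + ρ * zp < 1 := by
    have := (lt_div_iff₀ hρ0).mp h2
    nlinarith
  rcases le_or_gt zm zp with hc | hc
  · -- Case 1 : zm ≤ zp : split off mass μ from both points, spread outward by δ
    have hμ1 : min (p i₁) (p i₂) ≤ p i₁ := min_le_left _ _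
    have hμ2 : min (p i₁) (p i₂) ≤ p i₂ := min_le_right _ _
    set μ := min (p i₁) (p i₂) with hμdef
    have hμ0 : 0 < μ := lt_min hpi1 hpi2
    set δ := min (min ((a + ρ*zm)/ρ) ((1 - (a + ρ*zp))/ρ)) (1/2 - (zp - zm)) with hδdef
    have hδ0 : 0 < δ :=
      lt_min (lt_min (div_pos hxm0 hρ0) (div_pos (by linarith) hρ0)) (by linarith)
    have hδ1 : ρ * δ ≤ a + ρ*zm := by
      have h : δ ≤ (a + ρ*zm)/ρ := le_trans (min_le_left _ _) (min_le_left _ _)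
      rw [le_div_iff₀ hρ0] at h; linarith
    have hδ2 : ρ * δ ≤ 1 - (a + ρ*zp) := by
      have h : δ ≤ (1 - (a + ρ*zp))/ρ := le_trans (min_le_left _ _) (min_le_right _ _)
      rw [le_div_iff₀ hρ0] at h; linarith
    have hδ3 : 2*δ + 2*(zp - zm) ≤ 1 := by
      have := min_le_right (min ((a + ρ*zm)/ρ) ((1 - (a + ρ*zp))/ρ)) (1/2 - (zp - zm))
      linarith
    refine ⟨m+4, Fin.append s ![-a, 1-a, -a, -a], Fin.append z ![zm - δ, zp + δ, 0, 0],
      Fin.append (fun i => p i - (if i = i₁ then μ else 0) - (if i = i₂ then μ else 0))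
        ![μ, μ, 0, 0], ?_, ?_⟩
    · unfold Feasible
      refine ⟨?_, ?_, ?_, ?_, ?_, ?_, ?_⟩
      · intro i
        induction i using Fin.addCases with
        | left i =>
          simp only [Fin.append_left]
          split_ifs with hA hB hB
          · exact absurd (hA.symm.trans hB) hne
          · rw [hA]; linarith
          · rw [hB]; linarith
          · linarith [hp0 i]
        | right i =>
          simp only [Fin.append_right]
          fin_cases i <;> simp <;> linarith
      · simp only [Fin.sum_univ_add, Fin.append_left, Fin.append_right, Fin.sum_univ_four,
          Matrix.cons_val_zero, Matrix.cons_val_one, Matrix.head_cons, Matrix.cons_val_two,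
          Matrix.tail_cons, Matrix.cons_val_three, Finset.sum_sub_distrib,
          Finset.sum_ite_eq', Finset.mem_univ, if_true]
        linarith [hpsum]
      · intro i
        induction i using Fin.addCases with
        | left i => simp only [Fin.append_left]; exact hsval i
        | right i => fin_cases i <;> simp
      · rw [Finset.sum_filter]
        simp only [Fin.sum_univ_add, Fin.append_left, Fin.append_right, Fin.sum_univ_four,
          Matrix.cons_val_zero, Matrix.cons_val_one, Matrix.head_cons, Matrix.cons_val_two,
          Matrix.tail_cons, Matrix.cons_val_three, hsne, if_false, if_true, eq_self_iff_true]
        rw [conv1]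
        simp only [sub_mul, ite_mul, zero_mul, Finset.sum_sub_distrib,
          Finset.sum_ite_eq', Finset.mem_univ, if_true]
        rw [hsi1, hsi2]
        simp only [hsne, if_false, if_true, eq_self_iff_true]
        linarith [hfil']
      · intro i
        induction i using Fin.addCases with
        | left i => simp only [Fin.append_left]; exact hbox i
        | right i =>
          fin_cases i <;> simp <;> constructor <;>
            nlinarith [hδ1, hδ2, hxm1, hxp0, mul_pos hρ0 hδ0]
      · simp only [Fin.sum_univ_add, Fin.append_left, Fin.append_right, Fin.sum_univ_four,
          Matrix.cons_val_zero, Matrix.cons_val_one, Matrix.head_cons, Matrix.cons_val_two,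
          Matrix.tail_cons, Matrix.cons_val_three, sub_mul, ite_mul, zero_mul,
          Finset.sum_sub_distrib, Finset.sum_ite_eq', Finset.mem_univ, if_true]
        rw [hzi1, hzi2]
        linarith [hEZ]
      · simp only [Fin.sum_univ_add, Fin.append_left, Fin.append_right, Fin.sum_univ_four,
          Matrix.cons_val_zero, Matrix.cons_val_one, Matrix.head_cons, Matrix.cons_val_two,
          Matrix.tail_cons, Matrix.cons_val_three, sub_mul, ite_mul, zero_mul,
          Finset.sum_sub_distrib, Finset.sum_ite_eq', Finset.mem_univ, if_true]
        rw [hzi1, hzi2, hsi1, hsi2]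
        have hkey : μ*δ*(2*δ + 2*(zp - zm)) ≤ μ*δ*1 :=
          mul_le_mul_of_nonneg_left hδ3 (by positivity)
        nlinarith [heq, hkey]
    · simp only [Fin.sum_univ_add, Fin.append_left, Fin.append_right, Fin.sum_univ_four,
        Matrix.cons_val_zero, Matrix.cons_val_one, Matrix.head_cons, Matrix.cons_val_two,
        Matrix.tail_cons, Matrix.cons_val_three, sub_mul, ite_mul, zero_mul,
        Finset.sum_sub_distrib, Finset.sum_ite_eq', Finset.mem_univ, if_true]
      rw [hzi1, hzi2]
      have key := key_ineq hconv (u := a + ρ*(zm - δ)) (x := a + ρ*zm) (y := a + ρ*zp)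
        (t := a + ρ*(zp + δ)) (by nlinarith [hδ1]) (by nlinarith [hδ2])
        (by nlinarith [mul_pos hρ0 hδ0])
        (by nlinarith [mul_le_mul_of_nonneg_left hc hρ0.le])
        (by nlinarith [mul_pos hρ0 hδ0]) (by ring)
      have hmul := (mul_lt_mul_iff_right₀ hμ0).mpr key
      nlinarith [hmul]
  · -- Case 2 : zp < zm : label swap + spread of an interior point
    have hjex : ∃ j, 0 < p j ∧ 0 < a + ρ * z j ∧ a + ρ * z j < 1 := by
      by_contra hcon
      push_neg at hcon
      have hterm : ∀ i, 0 ≤ p i * (z i ^ 2 - s i * z i) := by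
        intro i
        rcases eq_or_lt_of_le (hp0 i) with hpi | hpi
        · rw [← hpi]; simp
        · have hb := hbox i
          rcases eq_or_lt_of_le hb.1 with hz0 | hz0
          · have hz : ρ * z i = -a := by linarith
            have hwneg : z i < 0 := by nlinarith
            have hterm2 : 0 < z i ^ 2 - s i * z i := by
              rcases hsval i with hs | hs <;> rw [hs]
              · have h2' : z i + a < 0 := by nlinarith
                nlinarith [mul_pos_of_neg_of_neg hwneg h2']
              · have h2' : z i - (1-a) < 0 := by nlinarith
                nlinarith [mul_pos_of_neg_of_neg hwneg h2']
            exact le_of_lt (mul_pos hpi hterm2)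
          · have h1' := hcon i hpi hz0
            have hz : ρ * z i = 1 - a := by linarith [hb.2]
            have hwpos : 0 < z i := by nlinarith
            have hterm2 : 0 < z i ^ 2 - s i * z i := by
              rcases hsval i with hs | hs <;> rw [hs]
              · have h2' : 0 < z i + a := by nlinarith
                nlinarith [mul_pos hwpos h2']
              · have h2' : 0 < z i - (1-a) := by nlinarith
                nlinarith [mul_pos hwpos h2']
            exact le_of_lt (mul_pos hpi hterm2)
      have hpos1 : 0 < p i₁ * (z i₁ ^ 2 - s i₁ * z i₁) := by
        have hz0 : 0 < a + ρ * z i₁ := by rw [hzi1]; exact hxm0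
        have h1' := hcon i₁ hpi1 hz0
        have hb := hbox i₁
        have hz : ρ * z i₁ = 1 - a := by linarith [hb.2]
        have hwpos : 0 < z i₁ := by nlinarith
        have hterm2 : 0 < z i₁ ^ 2 - s i₁ * z i₁ := by
          rw [hsi1]
          have h2' : 0 < z i₁ + a := by nlinarith
          nlinarith [mul_pos hwpos h2']
        exact mul_pos hpi1 hterm2
      have hsum : ∑ i, p i * (z i ^ 2 - s i * z i) = 0 := by
        have e : ∀ i ∈ Finset.univ, p i * (z i ^ 2 - s i * z i)
            = p i * z i ^ 2 - p i * (s i * z i) := fun i _ => by ring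
        rw [Finset.sum_congr rfl e, Finset.sum_sub_distrib, heq]; ring
      have hgt : 0 < ∑ i, p i * (z i ^ 2 - s i * z i) :=
        Finset.sum_pos' (fun i _ => hterm i) ⟨i₁, Finset.mem_univ _, hpos1⟩
      linarith
    obtain ⟨j, hpj, hxj0, hxj1⟩ := hjex
    have hmin1 : min (min (p i₁) (p i₂)) (p j) ≤ p i₁ :=
      le_trans (min_le_left _ _) (min_le_left _ _)
    have hmin2 : min (min (p i₁) (p i₂)) (p j) ≤ p i₂ :=
      le_trans (min_le_left _ _) (min_le_right _ _)
    have hmin3 : min (min (p i₁) (p i₂)) (p j) ≤ p j := min_le_right _ _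
    set τ := min (min (p i₁) (p i₂)) (p j) / 3 with hτdef
    have hτ0 : 0 < τ := by
      have : 0 < min (min (p i₁) (p i₂)) (p j) := lt_min (lt_min hpi1 hpi2) hpj
      positivity
    have hτ1 : 3 * τ ≤ p i₁ := by rw [hτdef]; linarith
    have hτ2 : 3 * τ ≤ p i₂ := by rw [hτdef]; linarith
    have hτ3 : 3 * τ ≤ p j := by rw [hτdef]; linarith
    set δ := min (min ((a + ρ*z j)/ρ) ((1 - (a + ρ*z j))/ρ)) (min (zm - zp) 1) with hδdef
    have hδ0 : 0 < δ :=
      lt_min (lt_min (div_pos hxj0 hρ0) (div_pos (by linarith) hρ0))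
        (lt_min (by linarith) one_pos)
    have hδa : ρ * δ ≤ a + ρ * z j := by
      have h : δ ≤ (a + ρ*z j)/ρ := le_trans (min_le_left _ _) (min_le_left _ _)
      rw [le_div_iff₀ hρ0] at h; linarith
    have hδb : ρ * δ ≤ 1 - (a + ρ * z j) := by
      have h : δ ≤ (1 - (a + ρ*z j))/ρ := le_trans (min_le_left _ _) (min_le_right _ _)
      rw [le_div_iff₀ hρ0] at h; linarith
    have hδc : δ ≤ zm - zp := le_trans (min_le_right _ _) (min_le_left _ _)
    have hδd : δ ≤ 1 := le_trans (min_le_right _ _) (min_le_right _ _)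
    have hδsq : δ^2 ≤ zm - zp := by nlinarith
    refine ⟨m+4, Fin.append s ![1-a, -a, s j, s j],
      Fin.append z ![zm, zp, z j + δ, z j - δ],
      Fin.append (fun i => p i - (if i = i₁ then τ else 0) - (if i = i₂ then τ else 0)
          - (if i = j then τ else 0)) ![τ, τ, τ/2, τ/2], ?_, ?_⟩
    · unfold Feasible
      refine ⟨?_, ?_, ?_, ?_, ?_, ?_, ?_⟩
      · intro i
        induction i using Fin.addCases with
        | left i =>
          simp only [Fin.append_left]
          have b1 : (if i = i₁ then τ else 0) ≤ p i / 3 := by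
            split_ifs with h
            · rw [h]; linarith
            · linarith [hp0 i]
          have b2 : (if i = i₂ then τ else 0) ≤ p i / 3 := by
            split_ifs with h
            · rw [h]; linarith
            · linarith [hp0 i]
          have b3 : (if i = j then τ else 0) ≤ p i / 3 := by
            split_ifs with h
            · rw [h]; linarith
            · linarith [hp0 i]
          linarith [hp0 i]
        | right i =>
          simp only [Fin.append_right]
          fin_cases i <;> simp <;> linarith
      · simp only [Fin.sum_univ_add, Fin.append_left, Fin.append_right, Fin.sum_univ_four,
          Matrix.cons_val_zero, Matrix.cons_val_one, Matrix.head_cons, Matrix.cons_val_two,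
          Matrix.tail_cons, Matrix.cons_val_three, Finset.sum_sub_distrib,
          Finset.sum_ite_eq', Finset.mem_univ, if_true]
        linarith [hpsum]
      · intro i
        induction i using Fin.addCases with
        | left i => simp only [Fin.append_left]; exact hsval i
        | right i =>
          fin_cases i <;> simp
          · exact Or.imp (fun h => h) (fun h => h) (hsval j)
          · exact Or.imp (fun h => h) (fun h => h) (hsval j)
      · rw [Finset.sum_filter]
        simp only [Fin.sum_univ_add, Fin.append_left, Fin.append_right, Fin.sum_univ_four,
          Matrix.cons_val_zero, Matrix.cons_val_one, Matrix.head_cons, Matrix.cons_val_two,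
          Matrix.tail_cons, Matrix.cons_val_three, hsne, if_false, if_true, eq_self_iff_true]
        rw [conv1]
        simp only [sub_mul, ite_mul, zero_mul, Finset.sum_sub_distrib,
          Finset.sum_ite_eq', Finset.mem_univ, if_true]
        rw [hsi1, hsi2]
        simp only [hsne, if_false, if_true, eq_self_iff_true]
        have e2 : (if s j = 1 - a then (τ/2 : ℝ) else 0) = τ/2 * (if s j = 1 - a then (1:ℝ) else 0) := by
          split_ifs <;> ring
        rw [e2]
        linarith [hfil']
      · intro i
        induction i using Fin.addCases with
        | left i => simp only [Fin.append_left]; exact hbox i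
        | right i =>
          fin_cases i <;> simp <;> constructor <;>
            nlinarith [hδa, hδb, hxm1, hxm0, hxp0, hxp1, hxj0, hxj1, mul_pos hρ0 hδ0]
      · simp only [Fin.sum_univ_add, Fin.append_left, Fin.append_right, Fin.sum_univ_four,
          Matrix.cons_val_zero, Matrix.cons_val_one, Matrix.head_cons, Matrix.cons_val_two,
          Matrix.tail_cons, Matrix.cons_val_three, sub_mul, ite_mul, zero_mul,
          Finset.sum_sub_distrib, Finset.sum_ite_eq', Finset.mem_univ, if_true]
        rw [hzi1, hzi2]
        linarith [hEZ]
      · simp only [Fin.sum_univ_add, Fin.append_left, Fin.append_right, Fin.sum_univ_four,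
          Matrix.cons_val_zero, Matrix.cons_val_one, Matrix.head_cons, Matrix.cons_val_two,
          Matrix.tail_cons, Matrix.cons_val_three, sub_mul, ite_mul, zero_mul,
          Finset.sum_sub_distrib, Finset.sum_ite_eq', Finset.mem_univ, if_true]
        rw [hzi1, hzi2, hsi1, hsi2]
        have hmul := mul_le_mul_of_nonneg_left hδsq hτ0.le
        nlinarith [heq, hmul]
    · simp only [Fin.sum_univ_add, Fin.append_left, Fin.append_right, Fin.sum_univ_four,
        Matrix.cons_val_zero, Matrix.cons_val_one, Matrix.head_cons, Matrix.cons_val_two,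
        Matrix.tail_cons, Matrix.cons_val_three, sub_mul, ite_mul, zero_mul,
        Finset.sum_sub_distrib, Finset.sum_ite_eq', Finset.mem_univ, if_true]
      rw [hzi1, hzi2]
      have key := key_ineq hconv (u := a + ρ*(z j - δ)) (x := a + ρ*z j) (y := a + ρ*z j)
        (t := a + ρ*(z j + δ)) (by nlinarith [hδa]) (by nlinarith [hδb])
        (by nlinarith [mul_pos hρ0 hδ0]) le_rfl
        (by nlinarith [mul_pos hρ0 hδ0]) (by ring)
      have hmul := (mul_lt_mul_iff_right₀ (show (0:ℝ) < τ/2 by positivity)).mpr key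
      nlinarith [hmul]
end

section
/- For α ∈ (1,2), the equation θ^{2−α} + (1−θ)/α = 1 in the unknown θ ∈ (0,1] has a unique solution θ(α); moreover θ(α) ∈ (0,1), and for α = 2 the equation is solved by θ satisfying 1 + (1−θ)/2 = 1, i.e. θ = 1. -/
/-- For `α ∈ (1,2)`, the equation `θ^{2−α} + (1−θ)/α = 1` has a unique solution
`θ(α) ∈ (0,1)`; for `α = 2` the equation reads `1 + (1−θ)/2 = 1` and is solved
exactly by `θ = 1`. -/
theorem stmt19 (α : ℝ) (hα : α ∈ Set.Ioo (1 : ℝ) 2) :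
    (∃! θ : ℝ, θ ∈ Set.Ioo (0 : ℝ) 1 ∧ θ ^ (2 - α) + (1 - θ) / α = 1) ∧
    (∀ θ : ℝ, 1 + (1 - θ) / 2 = 1 ↔ θ = 1) := by
  obtain ⟨hα1, hα2⟩ := hα
  have hαpos : (0:ℝ) < α := by linarith
  set β : ℝ := 2 - α with hβdef
  have hβ0 : 0 < β := by simp only [hβdef]; linarith
  have hβ1 : β < 1 := by simp only [hβdef]; linarith
  set f : ℝ → ℝ := fun θ => θ ^ β + (1 - θ) / α with hf
  -- strict concavity
  have hlin : ConcaveOn ℝ (Set.Ici (0:ℝ)) (fun θ : ℝ => (1 - θ) / α) := by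
    refine ⟨convex_Ici 0, fun x _ y _ a b ha hb hab => le_of_eq ?_⟩
    simp only [smul_eq_mul]
    field_simp
    nlinarith [hab]
  have hconc : StrictConcaveOn ℝ (Set.Ici (0:ℝ)) f :=
    (Real.strictConcaveOn_rpow hβ0 hβ1).add_concaveOn hlin
  -- f 1 = 1
  have hf1 : f 1 = 1 := by simp [hf, Real.one_rpow]
  -- continuity
  have hcont : Continuous f := by
    refine Continuous.add ?_ (by continuity)
    rw [continuous_iff_continuousAt]
    intro x
    exact Real.continuousAt_rpow_const x β (Or.inr hβ0.le)
  -- derivative at 1 is negative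
  have hderiv : HasDerivAt f (β - 1/α) 1 := by
    have h1 : HasDerivAt (fun x : ℝ => x ^ β) (β * (1:ℝ) ^ (β - 1)) 1 :=
      Real.hasDerivAt_rpow_const (Or.inl one_ne_zero)
    have h2 : HasDerivAt (fun x : ℝ => (1 - x) / α) (-1/α) 1 := by
      have : HasDerivAt (fun x : ℝ => (1 - x) / α) ((0 - 1) * (1/α)) 1 := by
        simpa [div_eq_mul_inv] using
          (((hasDerivAt_const (1:ℝ) (1:ℝ)).sub (hasDerivAt_id 1)).mul_const (1/α))
      simpa [neg_div] using this
    have h3 := h1.add h2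
    simp only [Real.one_rpow, mul_one] at h3
    exact h3.congr_deriv (by ring)
  have hdneg : β - 1/α < 0 := by
    rw [hβdef, sub_neg, lt_div_iff₀ hαpos]
    nlinarith
  -- a point θ₀ ∈ (0,1) with f θ₀ > 1
  have hslope := hasDerivAt_iff_tendsto_slope.mp hderiv
  have hev : ∀ᶠ x in nhdsWithin 1 (Set.Iio 1), slope f 1 x < 0 := by
    have h : ∀ᶠ x in nhdsWithin 1 ({1}ᶜ), slope f 1 x < 0 :=
      hslope.eventually (gt_mem_nhds hdneg)
    exact h.filter_mono (nhdsWithin_mono 1 (fun x hx => ne_of_lt hx))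
  have hmem : Set.Ioo (0:ℝ) 1 ∈ nhdsWithin 1 (Set.Iio 1) := by
    rw [mem_nhdsWithin]
    exact ⟨Set.Ioi 0, isOpen_Ioi, by norm_num, fun x hx => ⟨hx.1, hx.2⟩⟩
  obtain ⟨θ₀, hθ₀s, hθ₀m⟩ :=
    (hev.and (Filter.eventually_of_mem hmem (fun x hx => hx))).exists
  have hfθ₀ : 1 < f θ₀ := by
    have h1 : slope f 1 θ₀ = (f θ₀ - 1) / (θ₀ - 1) := by
      rw [slope_def_field, hf1]
    rw [h1] at hθ₀s
    have h2 : θ₀ - 1 < 0 := by linarith [hθ₀m.2]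
    have := (div_neg_iff.mp hθ₀s)
    rcases this with ⟨h3, h4⟩ | ⟨h3, h4⟩
    · linarith
    · linarith
  -- a point θ₁ ∈ (0, θ₀) with f θ₁ < 1
  have hf0 : f 0 < 1 := by
    have : (0:ℝ) ^ β = 0 := Real.zero_rpow (ne_of_gt hβ0)
    simp only [hf, this, sub_zero, zero_add]
    rw [div_lt_one hαpos]; linarith
  have hev0 : ∀ᶠ x in nhds (0:ℝ), f x < 1 :=
    (hcont.continuousAt (x := 0)).eventually (gt_mem_nhds hf0)
  have hmem0 : Set.Ioo (0:ℝ) θ₀ ∈ nhdsWithin 0 (Set.Ioi 0) := by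
    rw [mem_nhdsWithin]
    exact ⟨Set.Iio θ₀, isOpen_Iio, hθ₀m.1, fun x hx => ⟨hx.2, hx.1⟩⟩
  obtain ⟨θ₁, hθ₁s, hθ₁m⟩ :=
    (((hev0.filter_mono nhdsWithin_le_nhds).and
      (Filter.eventually_of_mem hmem0 (fun x hx => hx))) :
        ∀ᶠ x in nhdsWithin 0 (Set.Ioi 0), f x < 1 ∧ x ∈ Set.Ioo (0:ℝ) θ₀).exists
  -- IVT
  obtain ⟨c, hc, hfc⟩ : ∃ c ∈ Set.Ioo θ₁ θ₀, f c = 1 := by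
    have h := intermediate_value_Ioo (le_of_lt hθ₁m.2) hcont.continuousOn
      (a := θ₁) (b := θ₀)
    exact h ⟨hθ₁s, hfθ₀⟩
  have hcmem : c ∈ Set.Ioo (0:ℝ) 1 := ⟨lt_trans hθ₁m.1 hc.1, lt_trans hc.2 hθ₀m.2⟩
  -- uniqueness helper: no two distinct roots in (0,1)
  have key : ∀ x y : ℝ, x ∈ Set.Ioo (0:ℝ) 1 → y ∈ Set.Ioo (0:ℝ) 1 →
      f x = 1 → f y = 1 → ¬ x < y := by
    intro x y hx hy hfx hfy hxy
    have hxne1 : x ≠ 1 := ne_of_lt hx.2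
    have hymem : y ∈ openSegment ℝ x 1 := by
      rw [openSegment_eq_Ioo (lt_trans hxy hy.2)]
      exact ⟨hxy, hy.2⟩
    have := hconc.lt_on_openSegment (le_of_lt hx.1) (by norm_num) hxne1 hymem
    rw [hfx, hf1, hfy, min_self] at this
    exact lt_irrefl 1 this
  constructor
  · refine ⟨c, ⟨hcmem, hfc⟩, ?_⟩
    intro y ⟨hy, hfy⟩
    rcases lt_trichotomy y c with h | h | h
    · exact absurd h (key y c hy hcmem hfy hfc)
    · exact h
    · exact absurd h (key c y hcmem hy hfc hfy)
  · intro θ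
    constructor
    · intro h; linarith
    · intro h; rw [h]; norm_num
end
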